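/- arXiv:math/9307207 — 4 statements merged into one kernel-verified Lean document; each statement's English description precedes it below -/
import Mathlib

section
/- The polynomials u_n^μ(x;q) defined by the three-term recurrence admit the explicit basic hypergeometric representation u_n^μ(x;q) = Σ_{k=0}^n [(q^{-n};q)_k (x^{-1};q)_k / (q;q)_k] · (-qx/μ)^k, i.e. u_n^μ(x;q) = ₂φ₁(q^{-n}, x^{-1}; 0; q, -qx/μ), for all x ≠ 0. -/
/-- The q-Pochhammer symbol `(a;q)_k = ∏_{j=0}^{k-1} (1 - a q^j)`. -/
def qPoch (q a : ℝ) (k : ℕ) : ℝ := ∏ j ∈ Finset.range k, (1 - a * q ^ j)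

lemma qPoch_zero (q a : ℝ) : qPoch q a 0 = 1 := by simp [qPoch]

lemma qPoch_succ (q a : ℝ) (k : ℕ) : qPoch q a (k+1) = qPoch q a k * (1 - a * q ^ k) := by
  simp [qPoch, Finset.prod_range_succ]

lemma G1 (q a : ℝ) : ∀ k : ℕ, (a - 1) * qPoch q (a*q) k = (a * q ^ k - 1) * qPoch q a k := by
  intro k
  induction k with
  | zero => simp [qPoch]
  | succ k ih =>
    rw [qPoch_succ, qPoch_succ]
    linear_combination (1 - a*q*q^k) * ih

lemma G2 (q a : ℝ) : ∀ k : ℕ,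
    qPoch q a (k+1) - qPoch q (a*q) (k+1) = -(a * (1 - q ^ (k+1))) * qPoch q (a*q) k := by
  intro k
  induction k with
  | zero => simp [qPoch_succ, qPoch_zero]; ring
  | succ k ih =>
    rw [qPoch_succ q a (k+1), qPoch_succ q (a*q) (k+1)]
    rw [qPoch_succ q (a*q) k] at *
    linear_combination (1 - a*q^(k+1)) * ih

lemma zpow_mul_q (q : ℝ) (hq0 : q ≠ 0) (n : ℕ) :
    q ^ (-((n+1 : ℕ) : ℤ)) * q = q ^ (-(n : ℤ)) := by
  have h : (-(n:ℤ)) = -((n+1:ℕ):ℤ) + 1 := by push_cast; ring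
  rw [h, zpow_add_one₀ hq0]

lemma pow_mul_zpow_neg (q : ℝ) (hq0 : q ≠ 0) (n : ℕ) :
    q ^ n * q ^ (-(n : ℤ)) = 1 := by
  rw [← zpow_natCast q n, ← zpow_add₀ hq0]; simp

lemma I1 (q : ℝ) (hq0 : q ≠ 0) (n k : ℕ) :
    (1 - q^(n+1)) * qPoch q (q ^ (-(n:ℤ))) k
      = (q^k - q^(n+1)) * qPoch q (q ^ (-((n+1:ℕ):ℤ))) k := by
  have hG := G1 q (q ^ (-((n+1:ℕ):ℤ))) k
  rw [zpow_mul_q q hq0 n] at hG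
  have ha := pow_mul_zpow_neg q hq0 (n+1)
  linear_combination q^(n+1) * hG
    + (q^k * qPoch q (q ^ (-((n+1:ℕ):ℤ))) k - qPoch q (q ^ (-(n:ℤ))) k) * ha

lemma I2 (q : ℝ) (hq0 : q ≠ 0) (n k : ℕ) :
    q^(n+2) * qPoch q (q ^ (-((n+2:ℕ):ℤ))) (k+1)
      = q^(n+2) * qPoch q (q ^ (-((n+1:ℕ):ℤ))) (k+1)
        - (1 - q^(k+1)) * qPoch q (q ^ (-((n+1:ℕ):ℤ))) k := by
  have hG := G2 q (q ^ (-((n+2:ℕ):ℤ))) k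
  rw [show ((n+2:ℕ):ℤ) = ((n+1)+1:ℕ) by push_cast; ring] at hG
  rw [zpow_mul_q q hq0 (n+1)] at hG
  have ha := pow_mul_zpow_neg q hq0 (n+2)
  rw [show ((n+2:ℕ):ℤ) = (((n+1)+1:ℕ):ℤ) by push_cast; ring]
  linear_combination q^(n+2) * hG
    - (1 - q^(k+1)) * qPoch q (q ^ (-((n+1:ℕ):ℤ))) k * ha

lemma qPoch_vanish (q : ℝ) (hq0 : q ≠ 0) (n k : ℕ) (h : n < k) :
    qPoch q (q ^ (-(n:ℤ))) k = 0 := by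
  apply Finset.prod_eq_zero (Finset.mem_range.mpr h)
  have h1 : q ^ (-(n:ℤ)) * q ^ n = 1 := by
    rw [mul_comm]; exact pow_mul_zpow_neg q hq0 n
  rw [h1]; ring

lemma qPoch_q_pos (q : ℝ) (hq : 0 < q) (hq1 : q < 1) (k : ℕ) : 0 < qPoch q q k := by
  apply Finset.prod_pos
  intro j _
  have h : q * q ^ j = q ^ (j+1) := by ring
  rw [h]
  have : q ^ (j+1) < 1 := pow_lt_one₀ hq.le hq1 (Nat.succ_ne_zero j)
  linarith

set_option maxHeartbeats 2000000 in
lemma key (q μ x : ℝ) (hq : 0 < q) (hq1 : q < 1) (hμ : 0 < μ) (hx : x ≠ 0) (n k : ℕ) :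
    μ * q^(n+1) * (qPoch q (q ^ (-((n+2:ℕ):ℤ))) (k+1) * qPoch q x⁻¹ (k+1) / qPoch q q (k+1) * (-(q*x/μ))^(k+1))
    + (1 - q^(n+1)) * (qPoch q (q ^ (-(n:ℤ))) (k+1) * qPoch q x⁻¹ (k+1) / qPoch q q (k+1) * (-(q*x/μ))^(k+1))
    + (1 - μ) * q^(n+1) * (qPoch q (q ^ (-((n+1:ℕ):ℤ))) (k+1) * qPoch q x⁻¹ (k+1) / qPoch q q (k+1) * (-(q*x/μ))^(k+1))
    = (x - q^k) * (qPoch q (q ^ (-((n+1:ℕ):ℤ))) k * qPoch q x⁻¹ k / qPoch q q k * (-(q*x/μ))^k)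
    + q^(k+1) * (qPoch q (q ^ (-((n+1:ℕ):ℤ))) (k+1) * qPoch q x⁻¹ (k+1) / qPoch q q (k+1) * (-(q*x/μ))^(k+1)) := by
  have hq0 : q ≠ 0 := hq.ne'
  have hμ0 : μ ≠ 0 := hμ.ne'
  have hQ : qPoch q q k ≠ 0 := (qPoch_q_pos q hq hq1 k).ne'
  have h1q : (1 : ℝ) - q * q ^ k ≠ 0 := by
    have h : q * q ^ k = q ^ (k+1) := by ring
    rw [h]
    have : q ^ (k+1) < 1 := pow_lt_one₀ hq.le hq1 (Nat.succ_ne_zero k)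
    linarith
  have h1qn : (1 : ℝ) - q ^ (n+1) ≠ 0 := by
    have : q ^ (n+1) < 1 := pow_lt_one₀ hq.le hq1 (Nat.succ_ne_zero n)
    linarith
  have hqn2 : (q:ℝ)^(n+2) ≠ 0 := pow_ne_zero _ hq0
  have hI1 := I1 q hq0 n (k+1)
  have hI2 := I2 q hq0 n k
  rw [qPoch_succ q x⁻¹ k, qPoch_succ q q k, pow_succ (-(q*x/μ)) k]
  set a2 := qPoch q (q ^ (-((n+2:ℕ):ℤ))) (k+1) with ha2
  set a1' := qPoch q (q ^ (-((n+1:ℕ):ℤ))) (k+1) with ha1'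
  set a1 := qPoch q (q ^ (-((n+1:ℕ):ℤ))) k with ha1
  set a0 := qPoch q (q ^ (-(n:ℤ))) (k+1) with ha0
  set B := qPoch q x⁻¹ k with hB
  set Q := qPoch q q k with hQQ
  have e2 : a2 = a1' - (1-q^(k+1))*a1/q^(n+2) := by
    rw [sub_div' hqn2, eq_div_iff hqn2]
    linear_combination hI2
  have e0 : a0 = (q^(k+1)-q^(n+1))*a1'/(1-q^(n+1)) := by
    rw [eq_div_iff h1qn]
    linear_combination hI1
  rw [e2, e0]
  generalize (-(q*x/μ))^k = T
  rw [← pow_succ'] at h1q ⊢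
  field_simp
  ring

lemma telescope (N : ℕ) (f g h : ℕ → ℝ) (h0 : f 0 = g 0)
    (hstep : ∀ k, f (k+1) = h k + g (k+1)) (htop : h N = 0) :
    ∑ k ∈ Finset.range (N+1), f k = ∑ k ∈ Finset.range (N+1), (h k + g k) := by
  rw [Finset.sum_range_succ' f N]
  conv_rhs => rw [Finset.sum_add_distrib]
  rw [Finset.sum_range_succ h N, htop, add_zero, Finset.sum_range_succ' g N]
  simp only [hstep, h0]
  rw [Finset.sum_add_distrib]
  ring

theorem alSalamCarlitz_explicit
    (q μ : ℝ) (hq : 0 < q) (hq1 : q < 1) (hμ : 0 < μ)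
    (u : ℕ → ℝ → ℝ)
    (h0 : ∀ x : ℝ, u 0 x = 1)
    (h1 : ∀ x : ℝ, u 1 x = μ⁻¹ * (x - 1 + μ))
    (hrec : ∀ (n : ℕ) (x : ℝ),
      μ * q ^ (n + 1) * u (n + 2) x + (1 - q ^ (n + 1)) * u n x
        = (x - (1 - μ) * q ^ (n + 1)) * u (n + 1) x) :
    ∀ (n : ℕ) (x : ℝ), x ≠ 0 →
      u n x = ∑ k ∈ Finset.range (n + 1),
        qPoch q (q ^ (-(n : ℤ))) k * qPoch q x⁻¹ k / qPoch q q k * (-(q * x / μ)) ^ k := by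
  have hq0 : q ≠ 0 := hq.ne'
  have hμ0 : μ ≠ 0 := hμ.ne'
  have h1qne : (1:ℝ) - q ≠ 0 := by linarith
  intro n x hx
  induction n using Nat.twoStepInduction with
  | zero =>
    rw [h0]
    simp [qPoch]
  | one =>
    rw [h1, Finset.sum_range_succ, Finset.sum_range_one]
    simp only [qPoch_succ, qPoch_zero, pow_zero, pow_one, mul_one, one_mul]
    have : q ^ (-(1:ℕ):ℤ) = q⁻¹ := by
      simp
    rw [this]
    field_simp
    ring
  | more n ih ih1 =>
    -- abbreviate the summand
    have hvan1 : qPoch q (q ^ (-(n:ℤ))) (n+1) = 0 := qPoch_vanish q hq0 n (n+1) (by omega)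
    have hvan2 : qPoch q (q ^ (-(n:ℤ))) (n+2) = 0 := qPoch_vanish q hq0 n (n+2) (by omega)
    have hvan3 : qPoch q (q ^ (-((n+1:ℕ):ℤ))) (n+2) = 0 :=
      qPoch_vanish q hq0 (n+1) (n+2) (by omega)
    have e1 : ∑ k ∈ Finset.range (n+3),
          qPoch q (q ^ (-(n:ℤ))) k * qPoch q x⁻¹ k / qPoch q q k * (-(q*x/μ))^k
        = ∑ k ∈ Finset.range (n+1),
          qPoch q (q ^ (-(n:ℤ))) k * qPoch q x⁻¹ k / qPoch q q k * (-(q*x/μ))^k := by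
      rw [show n+3 = (n+2)+1 by rfl, Finset.sum_range_succ, Finset.sum_range_succ,
        hvan1, hvan2]
      simp
    have e2 : ∑ k ∈ Finset.range (n+3),
          qPoch q (q ^ (-((n+1:ℕ):ℤ))) k * qPoch q x⁻¹ k / qPoch q q k * (-(q*x/μ))^k
        = ∑ k ∈ Finset.range (n+1+1),
          qPoch q (q ^ (-((n+1:ℕ):ℤ))) k * qPoch q x⁻¹ k / qPoch q q k * (-(q*x/μ))^k := by
      rw [show n+3 = (n+2)+1 by rfl, Finset.sum_range_succ, hvan3]
      rw [show n+2 = n+1+1 by rfl]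
      simp
    have main : ∑ k ∈ Finset.range (n+3),
          (μ * q^(n+1) * (qPoch q (q ^ (-((n+2:ℕ):ℤ))) k * qPoch q x⁻¹ k / qPoch q q k * (-(q*x/μ))^k)
           + (1 - q^(n+1)) * (qPoch q (q ^ (-(n:ℤ))) k * qPoch q x⁻¹ k / qPoch q q k * (-(q*x/μ))^k)
           + (1 - μ) * q^(n+1) * (qPoch q (q ^ (-((n+1:ℕ):ℤ))) k * qPoch q x⁻¹ k / qPoch q q k * (-(q*x/μ))^k))
        = ∑ k ∈ Finset.range (n+3),
          x * (qPoch q (q ^ (-((n+1:ℕ):ℤ))) k * qPoch q x⁻¹ k / qPoch q q k * (-(q*x/μ))^k) := by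
      rw [show n+3 = (n+2)+1 by rfl]
      rw [telescope (n+2)
        (fun k => μ * q^(n+1) * (qPoch q (q ^ (-((n+2:ℕ):ℤ))) k * qPoch q x⁻¹ k / qPoch q q k * (-(q*x/μ))^k)
           + (1 - q^(n+1)) * (qPoch q (q ^ (-(n:ℤ))) k * qPoch q x⁻¹ k / qPoch q q k * (-(q*x/μ))^k)
           + (1 - μ) * q^(n+1) * (qPoch q (q ^ (-((n+1:ℕ):ℤ))) k * qPoch q x⁻¹ k / qPoch q q k * (-(q*x/μ))^k))
        (fun k => q^k * (qPoch q (q ^ (-((n+1:ℕ):ℤ))) k * qPoch q x⁻¹ k / qPoch q q k * (-(q*x/μ))^k))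
        (fun k => (x - q^k) * (qPoch q (q ^ (-((n+1:ℕ):ℤ))) k * qPoch q x⁻¹ k / qPoch q q k * (-(q*x/μ))^k))
        (by simp [qPoch_zero]; ring)
        (fun k => key q μ x hq hq1 hμ hx n k)
        (show (x - q^(n+2)) * (qPoch q (q ^ (-((n+1:ℕ):ℤ))) (n+2) * qPoch q x⁻¹ (n+2) / qPoch q q (n+2) * (-(q*x/μ))^(n+2)) = 0 from by rw [hvan3]; ring)]
      exact Finset.sum_congr rfl (fun k _ => by ring)
    have hr := hrec n x
    rw [ih, ih1, ← e1, ← e2] at hr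
    have main' : μ*q^(n+1) * (∑ k ∈ Finset.range (n+3),
          qPoch q (q ^ (-((n+2:ℕ):ℤ))) k * qPoch q x⁻¹ k / qPoch q q k * (-(q*x/μ))^k)
        + (1-q^(n+1)) * (∑ k ∈ Finset.range (n+3),
          qPoch q (q ^ (-(n:ℤ))) k * qPoch q x⁻¹ k / qPoch q q k * (-(q*x/μ))^k)
        + (1-μ)*q^(n+1) * (∑ k ∈ Finset.range (n+3),
          qPoch q (q ^ (-((n+1:ℕ):ℤ))) k * qPoch q x⁻¹ k / qPoch q q k * (-(q*x/μ))^k)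
        = x * (∑ k ∈ Finset.range (n+3),
          qPoch q (q ^ (-((n+1:ℕ):ℤ))) k * qPoch q x⁻¹ k / qPoch q q k * (-(q*x/μ))^k) := by
      rw [Finset.mul_sum, Finset.mul_sum, Finset.mul_sum, Finset.mul_sum,
        ← Finset.sum_add_distrib, ← Finset.sum_add_distrib]
      exact main
    have hfin : μ * q^(n+1) * u (n+2) x = μ * q^(n+1) *
        (∑ k ∈ Finset.range (n+3),
          qPoch q (q ^ (-((n+2:ℕ):ℤ))) k * qPoch q x⁻¹ k / qPoch q q k * (-(q*x/μ))^k) := by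
      linear_combination hr - main'
    have hμq : μ * q^(n+1) ≠ 0 := by positivity
    exact mul_left_cancel₀ hμq hfin
end

section
/- For each fixed n and each nonnegative integer s, lim_{q→1⁻} u_n^{(1-q)μ}(q^s; q) = ₂F₀(-n, -s; —; -1/μ) = Σ_{k=0}^{min(n,s)} [(-n)_k (-s)_k / k!] (-1/μ)^k, the Charlier polynomial c_n^μ(s). -/
open Filter Finset

noncomputable def Pf (x : ℝ) (k : ℕ) : ℝ := ∏ j ∈ Finset.range k, (x - j)

lemma Pf_zero (x : ℝ) : Pf x 0 = 1 := by simp [Pf]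

lemma Pf_succ (x : ℝ) (k : ℕ) : Pf x (k+1) = Pf x k * (x - k) := by
  simp [Pf, Finset.prod_range_succ]

lemma Pf_succ' (x : ℝ) (k : ℕ) : Pf (x+1) (k+1) = (x+1) * Pf x k := by
  rw [Pf, Finset.prod_range_succ', mul_comm]
  congr 1
  · norm_num
  · apply Finset.prod_congr rfl
    intro j _; push_cast; ring

lemma Pf_nat_eq_zero (n k : ℕ) (h : n < k) : Pf (n : ℝ) k = 0 := by
  apply Finset.prod_eq_zero (Finset.mem_range.mpr h)
  simp

noncomputable def θs (μ : ℝ) (n s k : ℕ) : ℝ :=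
  (∏ j ∈ Finset.range k, (-(n : ℝ) + j)) * (∏ j ∈ Finset.range k, (-(s : ℝ) + j))
    / (Nat.factorial k) * (-1 / μ) ^ k

lemma θs_eq (μ : ℝ) (hμ : μ ≠ 0) (n s k : ℕ) :
    θs μ n s k = (-1:ℝ)^k * Pf n k * Pf s k / (Nat.factorial k * μ ^ k) := by
  have h : ∀ m : ℕ, (∏ j ∈ Finset.range k, (-(m : ℝ) + j)) = (-1:ℝ)^k * Pf m k := by
    intro m
    have : ∀ j ∈ Finset.range k, (-(m : ℝ) + j) = (-1) * ((m:ℝ) - j) := by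
      intro j _; ring
    rw [Finset.prod_congr rfl this, Finset.prod_mul_distrib, Finset.prod_const,
      Finset.card_range, Pf]
  have hf : (Nat.factorial k : ℝ) ≠ 0 := by positivity
  rw [θs, h n, h s, div_pow]
  field_simp
  ring_nf
  rw [mul_comm k 2, pow_mul]
  norm_num

noncomputable def cC (μ : ℝ) (s n : ℕ) : ℝ := ∑ k ∈ Finset.range (n+1), θs μ n s k

noncomputable def gg (μ : ℝ) (s n k : ℕ) : ℝ :=
  (-1:ℝ)^k * Pf n k * Pf s k / (Nat.factorial k * μ ^ k)

noncomputable def vv (μ : ℝ) (s n k : ℕ) : ℝ :=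
  (-1:ℝ)^k * Pf ((n:ℝ)+1) k * Pf s (k+1) / (Nat.factorial k * μ ^ k)

lemma step_id (μ : ℝ) (hμ : μ ≠ 0) (s n m : ℕ) :
    μ * gg μ s (n+2) (m+1) - ((n:ℝ)+1-(s:ℝ)+μ) * gg μ s (n+1) (m+1)
      + ((n:ℝ)+1) * gg μ s n (m+1) = vv μ s n (m+1) - vv μ s n m := by
  have e1 : Pf ((n+2:ℕ):ℝ) (m+1) = ((n:ℝ)+2) * Pf ((n:ℝ)+1) m := by
    have h : ((n+2:ℕ):ℝ) = ((n:ℝ)+1)+1 := by push_cast; ring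
    rw [h, Pf_succ']; ring
  have e3 : Pf (n:ℝ) (m+1) = Pf (n:ℝ) m * ((n:ℝ) - m) := Pf_succ _ _
  have e4 : Pf (s:ℝ) (m+1) = Pf (s:ℝ) m * ((s:ℝ) - m) := Pf_succ _ _
  have e5 : Pf (s:ℝ) (m+2) = Pf (s:ℝ) m * ((s:ℝ) - m) * ((s:ℝ) - m - 1) := by
    rw [show m+2 = (m+1)+1 from rfl, Pf_succ, e4]
    push_cast; ring
  have e6 : Pf ((n:ℝ)+1) (m+1) = Pf ((n:ℝ)+1) m * ((n:ℝ)+1 - m) := Pf_succ _ _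
  have hc : Pf ((n:ℝ)+1) m * ((n:ℝ)+1-(m:ℝ)) = ((n:ℝ)+1) * Pf (n:ℝ) m := by
    rw [← e6, Pf_succ']
  have hf : (((m+1).factorial : ℕ) : ℝ) = ((m:ℝ)+1) * (m.factorial : ℝ) := by
    rw [Nat.factorial_succ]; push_cast; ring
  have hfm : ((m.factorial : ℕ) : ℝ) ≠ 0 := by positivity
  have hm1 : ((m:ℝ)+1) ≠ 0 := by positivity
  have hn1 : ((n:ℝ)+1) ≠ 0 := by positivity
  have e2' : Pf ((n+1:ℕ):ℝ) (m+1) = Pf ((n:ℝ)+1) m * ((n:ℝ)+1-(m:ℝ)) := by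
    have h : ((n+1:ℕ):ℝ) = ((n:ℝ))+1 := by push_cast; ring
    rw [h, e6]
  have e3' : Pf (n:ℝ) (m+1)
      = Pf ((n:ℝ)+1) m * ((n:ℝ)+1-(m:ℝ)) * ((n:ℝ)-(m:ℝ)) / ((n:ℝ)+1) := by
    rw [e3, eq_div_iff hn1]
    linear_combination (-((n:ℝ)-(m:ℝ))) * hc
  have hA : Pf (n:ℝ) m = Pf ((n:ℝ)+1) m * ((n:ℝ)+1-(m:ℝ)) / ((n:ℝ)+1) := by
    rw [eq_div_iff hn1]; linear_combination -hc
  simp only [gg, vv, e1, e2', e3', e4, e5, e6, hf, pow_succ, hA]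
  field_simp
  ring

lemma tele (μ : ℝ) (hμ : μ ≠ 0) (s n : ℕ) : ∀ N : ℕ,
    ∑ k ∈ Finset.range (N+1),
      (μ * gg μ s (n+2) k - ((n:ℝ)+1-(s:ℝ)+μ) * gg μ s (n+1) k + ((n:ℝ)+1) * gg μ s n k)
      = vv μ s n N := by
  intro N
  induction N with
  | zero =>
    simp only [Finset.sum_range_one, gg, vv, Pf_zero, zero_add, Pf_succ]
    norm_num
  | succ m ih =>
    rw [Finset.sum_range_succ, ih, step_id μ hμ s n m]
    ring

lemma gg_eq_zero (μ : ℝ) (s n k : ℕ) (h : n < k) : gg μ s n k = 0 := by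
  rw [gg, Pf_nat_eq_zero n k h]; ring

lemma cC_eq_sum (μ : ℝ) (hμ : μ ≠ 0) (s n N : ℕ) (h : n + 1 ≤ N) :
    cC μ s n = ∑ k ∈ Finset.range N, gg μ s n k := by
  rw [cC]
  have h1 : ∑ k ∈ Finset.range (n+1), θs μ n s k = ∑ k ∈ Finset.range (n+1), gg μ s n k :=
    Finset.sum_congr rfl fun k _ => θs_eq μ hμ n s k
  rw [h1]
  exact (Finset.sum_subset (Finset.range_subset_range.mpr h) (fun k hk hnk =>
    gg_eq_zero μ s n k (by simp only [Finset.mem_range, not_lt] at hnk; omega)))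

lemma cC_rec (μ : ℝ) (hμ : μ ≠ 0) (s n : ℕ) :
    μ * cC μ s (n+2) + ((n:ℝ)+1) * cC μ s n = ((n:ℝ)+1-(s:ℝ)+μ) * cC μ s (n+1) := by
  have h2 := tele μ hμ s n (n+2)
  have hv : vv μ s n (n+2) = 0 := by
    have : Pf ((n:ℝ)+1) (n+2) = 0 := by
      have hcast : ((n:ℝ)+1) = ((n+1:ℕ):ℝ) := by push_cast; ring
      rw [hcast]; exact Pf_nat_eq_zero (n+1) (n+2) (by omega)
    rw [vv, this]; ring
  rw [hv] at h2
  have e0 : cC μ s n = ∑ k ∈ Finset.range ((n+2)+1), gg μ s n k := cC_eq_sum μ hμ s n _ (by omega)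
  have e1 : cC μ s (n+1) = ∑ k ∈ Finset.range ((n+2)+1), gg μ s (n+1) k :=
    cC_eq_sum μ hμ s (n+1) _ (by omega)
  have e2 : cC μ s (n+2) = ∑ k ∈ Finset.range ((n+2)+1), gg μ s (n+2) k :=
    cC_eq_sum μ hμ s (n+2) _ (by omega)
  rw [e0, e1, e2]
  rw [Finset.sum_add_distrib, Finset.sum_sub_distrib, ← Finset.mul_sum, ← Finset.mul_sum,
    ← Finset.mul_sum] at h2
  linarith

lemma one_sub_pow (q : ℝ) (m : ℕ) : 1 - q^m = (1-q) * ∑ i ∈ Finset.range m, q^i := by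
  linear_combination geom_sum_mul q m

lemma tendsto_S (m : ℕ) :
    Tendsto (fun q : ℝ => ∑ i ∈ Finset.range m, q^i)
      (nhdsWithin 1 (Set.Ioo (0:ℝ) 1)) (nhds (m : ℝ)) := by
  have hc : Continuous fun q : ℝ => ∑ i ∈ Finset.range m, q^i := by
    apply continuous_finset_sum
    intro i _
    exact continuous_pow i
  have h : Tendsto (fun q : ℝ => ∑ i ∈ Finset.range m, q^i)
      (nhdsWithin 1 (Set.Ioo (0:ℝ) 1)) (nhds (∑ i ∈ Finset.range m, (1:ℝ)^i)) :=
    (hc.tendsto 1).mono_left nhdsWithin_le_nhds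
  simpa using h

theorem alSalamCarlitz_charlier_limit
    (μ : ℝ) (hμ : 0 < μ)
    (u : ℝ → ℝ → ℕ → ℝ → ℝ)
    (h0 : ∀ q ∈ Set.Ioo (0:ℝ) 1, ∀ μ' : ℝ, 0 < μ' → ∀ x : ℝ, u q μ' 0 x = 1)
    (h1 : ∀ q ∈ Set.Ioo (0:ℝ) 1, ∀ μ' : ℝ, 0 < μ' → ∀ x : ℝ,
      u q μ' 1 x = μ'⁻¹ * (x - 1 + μ'))
    (hrec : ∀ q ∈ Set.Ioo (0:ℝ) 1, ∀ μ' : ℝ, 0 < μ' → ∀ (n : ℕ) (x : ℝ),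
      μ' * q ^ (n + 1) * u q μ' (n + 2) x + (1 - q ^ (n + 1)) * u q μ' n x
        = (x - (1 - μ') * q ^ (n + 1)) * u q μ' (n + 1) x)
    (n s : ℕ) :
    Tendsto (fun q : ℝ => u q ((1 - q) * μ) n (q ^ s))
      (nhdsWithin 1 (Set.Ioo (0:ℝ) 1))
      (nhds (∑ k ∈ Finset.range (min n s + 1),
        (∏ j ∈ Finset.range k, (-(n : ℝ) + j)) * (∏ j ∈ Finset.range k, (-(s : ℝ) + j))
          / (Nat.factorial k) * (-1 / μ) ^ k)) := by
  have hmu : μ ≠ 0 := ne_of_gt hμ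
  set F := nhdsWithin (1:ℝ) (Set.Ioo (0:ℝ) 1) with hF
  have hμ' : ∀ q ∈ Set.Ioo (0:ℝ) 1, 0 < (1-q)*μ := fun q hq =>
    mul_pos (by linarith [hq.2]) hμ
  have hev : ∀ᶠ q in F, q ∈ Set.Ioo (0:ℝ) 1 := self_mem_nhdsWithin
  have tq : Tendsto (fun q : ℝ => q) F (nhds 1) := tendsto_id.mono_left nhdsWithin_le_nhds
  have key : ∀ m : ℕ,
      Tendsto (fun q : ℝ => u q ((1 - q) * μ) m (q ^ s)) F (nhds (cC μ s m)) ∧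
      Tendsto (fun q : ℝ => u q ((1 - q) * μ) (m+1) (q ^ s)) F (nhds (cC μ s (m+1))) := by
    intro m
    induction m with
    | zero =>
      constructor
      · have c0 : cC μ s 0 = 1 := by simp [cC, θs]
        have hee : (fun q : ℝ => u q ((1 - q) * μ) 0 (q ^ s)) =ᶠ[F] fun _ => (1:ℝ) :=
          hev.mono fun q hq => h0 q hq _ (hμ' q hq) _
        rw [c0]
        exact Tendsto.congr' hee.symm tendsto_const_nhds
      · have c1 : cC μ s 1 = 1 - (s:ℝ)/μ := by
          simp [cC, θs, Finset.sum_range_succ]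
          field_simp
          ring
        have hee : (fun q : ℝ => u q ((1 - q) * μ) 1 (q ^ s))
            =ᶠ[F] fun q => 1 - (∑ i ∈ Finset.range s, q^i)/μ := by
          refine hev.mono fun q hq => ?_
          show u q ((1 - q) * μ) 1 (q ^ s) = 1 - (∑ i ∈ Finset.range s, q^i)/μ
          rw [h1 q hq _ (hμ' q hq)]
          have h1q : (1:ℝ) - q ≠ 0 := by
            have h2 := hq.2
            intro h
            have : q = 1 := by linarith [sub_eq_zero.mp h]
            linarith
          have hg : q^s - 1 = -((1-q) * ∑ i ∈ Finset.range s, q^i) := by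
            linear_combination -(one_sub_pow q s)
          field_simp
          linear_combination hg
        have ht : Tendsto (fun q : ℝ => 1 - (∑ i ∈ Finset.range s, q^i)/μ) F
            (nhds (1 - (s:ℝ)/μ)) :=
          tendsto_const_nhds.sub ((tendsto_S s).div_const μ)
        rw [c1]
        exact Tendsto.congr' hee.symm ht
    | succ m ih =>
      obtain ⟨IH0, IH1⟩ := ih
      refine ⟨IH1, ?_⟩
      have hee : (fun q : ℝ => u q ((1 - q) * μ) (m+2) (q ^ s))
          =ᶠ[F] fun q =>
            (((∑ i ∈ Finset.range (m+1), q^i) - (∑ i ∈ Finset.range s, q^i) + μ * q^(m+1))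
                * u q ((1-q)*μ) (m+1) (q^s)
              - (∑ i ∈ Finset.range (m+1), q^i) * u q ((1-q)*μ) m (q^s)) / (μ * q^(m+1)) := by
        refine hev.mono fun q hq => ?_
        show u q ((1 - q) * μ) (m+2) (q ^ s) =
          (((∑ i ∈ Finset.range (m+1), q^i) - (∑ i ∈ Finset.range s, q^i) + μ * q^(m+1))
              * u q ((1-q)*μ) (m+1) (q^s)
            - (∑ i ∈ Finset.range (m+1), q^i) * u q ((1-q)*μ) m (q^s)) / (μ * q^(m+1))
        have h1q : (1:ℝ) - q ≠ 0 := by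
          have h2 := hq.2
          intro h
          have : q = 1 := by linarith [sub_eq_zero.mp h]
          linarith
        have hq0 : q ≠ 0 := ne_of_gt hq.1
        have hqp : q^(m+1) ≠ 0 := pow_ne_zero _ hq0
        have hden : μ * q^(m+1) ≠ 0 := mul_ne_zero hmu hqp
        have hr := hrec q hq ((1-q)*μ) (hμ' q hq) m (q^s)
        have hs1 : 1 - q^(m+1) = (1-q) * ∑ i ∈ Finset.range (m+1), q^i := one_sub_pow q (m+1)
        have hss : 1 - q^s = (1-q) * ∑ i ∈ Finset.range s, q^i := one_sub_pow q s
        rw [eq_div_iff hden]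
        apply mul_left_cancel₀ h1q
        linear_combination hr + (u q ((1-q)*μ) (m+1) (q^s)) * hs1
          - (u q ((1-q)*μ) (m+1) (q^s)) * hss - (u q ((1-q)*μ) m (q^s)) * hs1
      have t1 : Tendsto (fun q : ℝ => q^(m+1)) F (nhds 1) := by
        have := tq.pow (m+1)
        simpa using this
      have tnum : Tendsto (fun q : ℝ =>
          ((∑ i ∈ Finset.range (m+1), q^i) - (∑ i ∈ Finset.range s, q^i) + μ * q^(m+1))
              * u q ((1-q)*μ) (m+1) (q^s)
            - (∑ i ∈ Finset.range (m+1), q^i) * u q ((1-q)*μ) m (q^s)) F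
          (nhds ((((m+1:ℕ):ℝ) - (s:ℝ) + μ * 1) * cC μ s (m+1) - ((m+1:ℕ):ℝ) * cC μ s m)) :=
        (((tendsto_S (m+1)).sub (tendsto_S s)).add (tendsto_const_nhds.mul t1)).mul IH1
          |>.sub ((tendsto_S (m+1)).mul IH0)
      have tden : Tendsto (fun q : ℝ => μ * q^(m+1)) F (nhds (μ * 1)) :=
        tendsto_const_nhds.mul t1
      have tfin := tnum.div tden (by simp [hmu])
      have hval : ((((m+1:ℕ):ℝ) - (s:ℝ) + μ * 1) * cC μ s (m+1) - ((m+1:ℕ):ℝ) * cC μ s m)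
          / (μ * 1) = cC μ s (m+2) := by
        have hrec2 := cC_rec μ hmu s m
        rw [eq_comm, eq_div_iff (by simp [hmu] : μ * 1 ≠ 0)]
        push_cast
        linear_combination hrec2
      rw [hval] at tfin
      exact Tendsto.congr' hee.symm tfin
  have hfin : cC μ s n = ∑ k ∈ Finset.range (min n s + 1),
      (∏ j ∈ Finset.range k, (-(n : ℝ) + j)) * (∏ j ∈ Finset.range k, (-(s : ℝ) + j))
        / (Nat.factorial k) * (-1 / μ) ^ k := by
    rw [cC]
    refine (Finset.sum_subset (Finset.range_subset_range.mpr (by omega : min n s + 1 ≤ n + 1))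
      (fun k hk hnk => ?_)).symm
    have hsk : s < k := by
      simp only [Finset.mem_range] at hk hnk
      omega
    have hz : (∏ j ∈ Finset.range k, (-(s : ℝ) + j)) = 0 := by
      apply Finset.prod_eq_zero (Finset.mem_range.mpr hsk)
      simp
    rw [θs, hz]
    ring
  rw [← hfin]
  exact (key n).1
end

section
/- If α(s) = ε q^s and β²(s) = ε²(q^{s+1}-γ)(q^s-δ) with (1-q)γδε² = 1, then α and β satisfy α(s+1) = qα(s) and (1-q)α²(s) + β²(s) - qβ²(s-1) = 1 for all s, so the operators a = α(s) - β(s)e^∂, a⁺ = α(s) - e^{-∂}β(s) satisfy a a⁺ - q a⁺ a = 1. -/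
/-- `(a f)(s) = α(s) f(s) - β(s) f(s+1)`. -/
def aOp (α β : ℤ → ℝ) (f : ℤ → ℝ) : ℤ → ℝ := fun s => α s * f s - β s * f (s + 1)

/-- `(a⁺ f)(s) = α(s) f(s) - β(s-1) f(s-1)`. -/
def aPlusOp (α β : ℤ → ℝ) (f : ℤ → ℝ) : ℤ → ℝ := fun s => α s * f s - β (s - 1) * f (s - 1)

theorem q_commutation_solution (q ε γ δ : ℝ) (hq : q ≠ 0)
    (α β : ℤ → ℝ)
    (hα : ∀ s : ℤ, α s = ε * q ^ s)
    (hβ : ∀ s : ℤ, β s ^ 2 = ε ^ 2 * (q ^ (s + 1) - γ) * (q ^ s - δ))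
    (hc : (1 - q) * γ * δ * ε ^ 2 = 1) :
    (∀ s : ℤ, α (s + 1) = q * α s) ∧
      (∀ s : ℤ, (1 - q) * α s ^ 2 + β s ^ 2 - q * β (s - 1) ^ 2 = 1) ∧
      (∀ (f : ℤ → ℝ) (s : ℤ),
        aOp α β (aPlusOp α β f) s - q * aPlusOp α β (aOp α β f) s = f s) := by
  have h1 : ∀ s : ℤ, α (s + 1) = q * α s := by
    intro s
    rw [hα, hα, zpow_add_one₀ hq]
    ring
  have h2 : ∀ s : ℤ, (1 - q) * α s ^ 2 + β s ^ 2 - q * β (s - 1) ^ 2 = 1 := by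
    intro s
    have hx1 : q * q ^ (s - 1) = q ^ s := by
      rw [mul_comm, ← zpow_add_one₀ hq, sub_add_cancel]
    have hx2 : (q : ℝ) ^ (s - 1 + 1) = q ^ s := by congr 1; ring
    have hx3 : (q : ℝ) ^ (s + 1) = q * q ^ s := by
      rw [zpow_add_one₀ hq]; ring
    rw [hα, hβ, hβ, hx2, hx3, ← hx1]
    linear_combination hc
  refine ⟨h1, h2, ?_⟩
  intro f s
  simp only [aOp, aPlusOp, add_sub_cancel_right, sub_add_cancel]
  have h1a : α s = q * α (s - 1) := by
    have := h1 (s - 1)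
    rwa [sub_add_cancel] at this
  have h1b := h1 s
  have h2s := h2 s
  linear_combination f s * h2s - f (s - 1) * β (s - 1) * h1a - f (s + 1) * β s * h1b
end

section
/- Define a = ε(e^{γ∂}α(s) + e^{-γ∂}β(s))/(α(s)-β(s)) and a⁺ = ε(α(s)e^{-γ∂} + β(s)e^{γ∂})/(α(s)-β(s)), with α(s)β(s) = 1, α(s+2γ) = q^{-1}α(s), γ = 1/2, α(s) = q^{-s}, and ε² = q^{1/2}/(1-q). Then a a⁺ - q a⁺ a = 1 as operators on functions of s ∈ ℝ. -/
/-- `(a f)(s) = ε (α(s+γ) f(s+γ) + β(s-γ) f(s-γ))/(α(s) - β(s))` with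
`γ = 1/2`, `α(s) = q^{-s}`, `β(s) = q^s`. -/
noncomputable def aOp3 (q ε : ℝ) (f : ℝ → ℂ) : ℝ → ℂ := fun s =>
  (ε : ℂ) * (((q ^ (-(s + 1 / 2)) : ℝ) : ℂ) * f (s + 1 / 2)
      + ((q ^ (s - 1 / 2) : ℝ) : ℂ) * f (s - 1 / 2))
    / (((q ^ (-s) : ℝ) : ℂ) - ((q ^ s : ℝ) : ℂ))

/-- `(a⁺ f)(s) = ε (α(s) f(s-γ) + β(s) f(s+γ))/(α(s) - β(s))`. -/
noncomputable def aPlusOp3 (q ε : ℝ) (f : ℝ → ℂ) : ℝ → ℂ := fun s =>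
  (ε : ℂ) * (((q ^ (-s) : ℝ) : ℂ) * f (s - 1 / 2)
      + ((q ^ s : ℝ) : ℂ) * f (s + 1 / 2))
    / (((q ^ (-s) : ℝ) : ℂ) - ((q ^ s : ℝ) : ℂ))


set_option maxHeartbeats 4000000 in
lemma core_q_comm' (U V W A B C : ℂ) (hU : U ≠ 0) (hV : V ≠ 0)
    (h2 : (1:ℂ) - U^2 ≠ 0) (hp2 : (1:ℂ) - U^2*V^2 ≠ 0) (hm2 : V^2 - U^2 ≠ 0)
    (h1V : (1:ℂ) - V^2 ≠ 0) (hW : W = V/(1-V^2)) :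
    W * ((U*V)⁻¹ * (((U*V)⁻¹*A + U*V*B) / ((U*V)⁻¹ - U*V))
        + (U/V) * (((V/U)*C + (U/V)*A) / (V/U - U/V)))/ (U⁻¹ - U)
     - V^2 * (W * (U⁻¹ * ((U⁻¹*A + (U/V^2)*C) / (V/U - U/V))
        + U * (((U*V^2)⁻¹*B + U*A) / ((U*V)⁻¹ - U*V))) / (U⁻¹ - U)) = A := by
  subst hW
  have h2' : U^2 - 1 ≠ 0 := fun h => h2 (by linear_combination -h)
  have h1V' : V^2 - 1 ≠ 0 := fun h => h1V (by linear_combination -h)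
  have hP1 : (-(V^2*U^3) + V^2*U^5 + V^4*U + (-(V^4*U^7) - V^6*U) + V^6*U^7
      + (V^8*U^3 - V^8*U^5)) ≠ 0 := by
    have h : (-(V^2*U^3) + V^2*U^5 + V^4*U + (-(V^4*U^7) - V^6*U) + V^6*U^7
        + (V^8*U^3 - V^8*U^5)) = U*(V^2*((U^2-1)*((V^2-1)*((1-U^2*V^2)*(V^2-U^2))))) := by
      ring
    rw [h]
    exact mul_ne_zero hU (mul_ne_zero (pow_ne_zero 2 hV) (mul_ne_zero h2'
      (mul_ne_zero h1V' (mul_ne_zero hp2 hm2))))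
  have hP2 : (V^2*U + (-(V^2*U^3) - V^4*U) + V^4*U^5 + (V^6*U^3 - V^6*U^5)) ≠ 0 := by
    have h : (V^2*U + (-(V^2*U^3) - V^4*U) + V^4*U^5 + (V^6*U^3 - V^6*U^5))
        = U*(V^2*((1-U^2)*((1-V^2)*(1-U^2*V^2)))) := by ring
    rw [h]
    exact mul_ne_zero hU (mul_ne_zero (pow_ne_zero 2 hV) (mul_ne_zero h2
      (mul_ne_zero h1V hp2)))
  have hP3 : (-(V^2*U^4) + V^4*U^2 : ℂ) ≠ 0 := by
    have h : (-(V^2*U^4) + V^4*U^2 : ℂ) = U^2*(V^2*(V^2-U^2)) := by ring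
    rw [h]
    exact mul_ne_zero (pow_ne_zero 2 hU) (mul_ne_zero (pow_ne_zero 2 hV) hm2)
  have hQ1 : (V*U - V^3*U^3 : ℂ) ≠ 0 := by
    have h : (V*U - V^3*U^3 : ℂ) = U*(V*(1-U^2*V^2)) := by ring
    rw [h]; exact mul_ne_zero hU (mul_ne_zero hV hp2)
  have hQ2 : (-(V*U^2) + V^3 : ℂ) ≠ 0 := by
    have h : (-(V*U^2) + V^3 : ℂ) = V*(V^2-U^2) := by ring
    rw [h]; exact mul_ne_zero hV hm2
  have hQ3 : ((1:ℂ) - V^2 + (V^2*U^2 - U^2)) ≠ 0 := by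
    have h : ((1:ℂ) - V^2 + (V^2*U^2 - U^2)) = (1-U^2)*(1-V^2) := by ring
    rw [h]; exact mul_ne_zero h2 h1V
  have hQ4 : (V^2*U - V^4*U^3 : ℂ) ≠ 0 := by
    have h : (V^2*U - V^4*U^3 : ℂ) = U*(V^2*(1-U^2*V^2)) := by ring
    rw [h]; exact mul_ne_zero hU (mul_ne_zero (pow_ne_zero 2 hV) hp2)
  have hp2' : (1:ℂ) - U*V*(U*V) ≠ 0 := fun h => hp2 (by linear_combination h)
  have hm2' : V*V - U*U ≠ 0 := fun h => hm2 (by linear_combination h)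
  have h2'' : (1:ℂ) - U*U ≠ 0 := fun h => h2 (by linear_combination h)
  field_simp [hP1, hP2, hP3, hQ1, hQ2, hQ3, hQ4, hp2', hm2', h2'']
  have hd : U * (U * V^2 * (V*V - U*U)) ≠ 0 :=
    mul_ne_zero hU (mul_ne_zero (mul_ne_zero hU (pow_ne_zero 2 hV)) hm2')
  have hp3 : (1:ℂ) - V^2*U^2 ≠ 0 := fun h => hp2 (by linear_combination h)
  field_simp
  ring

lemma core_q_comm (U V E A B C : ℂ) (hU : U ≠ 0) (hV : V ≠ 0)
    (h2 : (1:ℂ) - U^2 ≠ 0) (hp2 : (1:ℂ) - U^2*V^2 ≠ 0) (hm2 : V^2 - U^2 ≠ 0)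
    (h1V : (1:ℂ) - V^2 ≠ 0) (hE : E^2 = V/(1-V^2)) :
    E * ((U*V)⁻¹ * (E * ((U*V)⁻¹*A + U*V*B) / ((U*V)⁻¹ - U*V))
        + (U/V) * (E * ((V/U)*C + (U/V)*A) / (V/U - U/V))) / (U⁻¹ - U)
     - V^2 * (E * (U⁻¹ * (E * (U⁻¹*A + (U/V^2)*C) / (V/U - U/V))
        + U * (E * ((U*V^2)⁻¹*B + U*A) / ((U*V)⁻¹ - U*V))) / (U⁻¹ - U)) = A := by
  have h := core_q_comm' U V (E^2) A B C hU hV h2 hp2 hm2 h1V hE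
  linear_combination h

set_option maxHeartbeats 4000000 in
theorem q_commutation_symmetric_case (q ε : ℝ) (hq : 0 < q) (hq1 : q < 1)
    (hε : ε ^ 2 = Real.sqrt q / (1 - q)) :
    ∀ (f : ℝ → ℂ) (s : ℝ), s ≠ 0 → s ≠ 1 / 2 → s ≠ -(1 / 2) →
      aOp3 q ε (aPlusOp3 q ε f) s - (q : ℂ) * aPlusOp3 q ε (aOp3 q ε f) s = f s := by
  intro f s hs0 hs1 hs2
  have hstrict : StrictAnti fun x : ℝ => q ^ x :=
    fun a b hab => (Real.rpow_lt_rpow_left_iff_of_base_lt_one hq hq1).mpr hab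
  have hqexp : ∀ a b : ℝ, a ≠ b → q ^ a ≠ q ^ b := fun a b hab h => hab (hstrict.injective h)
  have hv2 : q ^ (1/2:ℝ) * q ^ (1/2:ℝ) = q := by
    rw [← Real.rpow_add hq]; norm_num
  have hupos : (0:ℝ) < q ^ s := Real.rpow_pos_of_pos hq s
  have hvpos : (0:ℝ) < q ^ (1/2:ℝ) := Real.rpow_pos_of_pos hq _
  have hU : ((q ^ s : ℝ):ℂ) ≠ 0 := Complex.ofReal_ne_zero.mpr hupos.ne'
  have hV : ((q ^ (1/2:ℝ) : ℝ):ℂ) ≠ 0 := Complex.ofReal_ne_zero.mpr hvpos.ne'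
  have hu2 : q ^ (s+s) = (q ^ s)^2 := by rw [Real.rpow_add hq, pow_two]
  have huv2 : q ^ (s+s+1) = (q ^ s)^2 * (q ^ (1/2:ℝ))^2 := by
    rw [Real.rpow_add hq, Real.rpow_add hq, Real.rpow_one, pow_two, pow_two, hv2]
  have hv2' : q ^ (1:ℝ) = (q ^ (1/2:ℝ))^2 := by rw [Real.rpow_one, pow_two, hv2]
  have h2r : (1:ℝ) - (q ^ s)^2 ≠ 0 := by
    rw [← hu2]
    have h := hqexp (s+s) 0 (fun h => hs0 (by linarith))
    rw [Real.rpow_zero] at h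
    exact fun hh => h (by linarith)
  have hp2r : (1:ℝ) - (q ^ s)^2 * (q ^ (1/2:ℝ))^2 ≠ 0 := by
    rw [← huv2]
    have h := hqexp (s+s+1) 0 (fun h => hs2 (by linarith))
    rw [Real.rpow_zero] at h
    exact fun hh => h (by linarith)
  have hm2r : (q ^ (1/2:ℝ))^2 - (q ^ s)^2 ≠ 0 := by
    rw [← hu2, ← hv2']
    have h := hqexp 1 (s+s) (fun h => hs1 (by linarith))
    exact fun hh => h (by linarith)
  have h1Vr : (1:ℝ) - (q ^ (1/2:ℝ))^2 ≠ 0 := by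
    rw [← hv2', Real.rpow_one]
    exact fun h => (ne_of_lt hq1) (by linarith)
  have h2c : (1:ℂ) - ((q ^ s : ℝ):ℂ)^2 ≠ 0 := by
    rw [show (1:ℂ) - ((q ^ s : ℝ):ℂ)^2 = (((1 - (q ^ s)^2 : ℝ)):ℂ) by push_cast; ring]
    exact Complex.ofReal_ne_zero.mpr h2r
  have hp2c : (1:ℂ) - ((q ^ s : ℝ):ℂ)^2 * ((q ^ (1/2:ℝ) : ℝ):ℂ)^2 ≠ 0 := by
    rw [show (1:ℂ) - ((q ^ s : ℝ):ℂ)^2 * ((q ^ (1/2:ℝ) : ℝ):ℂ)^2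
      = (((1 - (q ^ s)^2 * (q ^ (1/2:ℝ))^2 : ℝ)):ℂ) by push_cast; ring]
    exact Complex.ofReal_ne_zero.mpr hp2r
  have hm2c : ((q ^ (1/2:ℝ) : ℝ):ℂ)^2 - ((q ^ s : ℝ):ℂ)^2 ≠ 0 := by
    rw [show ((q ^ (1/2:ℝ) : ℝ):ℂ)^2 - ((q ^ s : ℝ):ℂ)^2
      = ((((q ^ (1/2:ℝ))^2 - (q ^ s)^2 : ℝ)):ℂ) by push_cast; ring]
    exact Complex.ofReal_ne_zero.mpr hm2r
  have h1Vc : (1:ℂ) - ((q ^ (1/2:ℝ) : ℝ):ℂ)^2 ≠ 0 := by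
    rw [show (1:ℂ) - ((q ^ (1/2:ℝ) : ℝ):ℂ)^2 = (((1 - (q ^ (1/2:ℝ))^2 : ℝ)):ℂ) by
      push_cast; ring]
    exact Complex.ofReal_ne_zero.mpr h1Vr
  have hEr : ε^2 = q ^ (1/2:ℝ) / (1 - (q ^ (1/2:ℝ))^2) := by
    rw [hε, Real.sqrt_eq_rpow, pow_two, hv2]
  have hE : ((ε:ℝ):ℂ)^2 = ((q ^ (1/2:ℝ) : ℝ):ℂ) / (1 - ((q ^ (1/2:ℝ) : ℝ):ℂ)^2) := by
    exact_mod_cast congrArg (fun x : ℝ => (x:ℂ)) hEr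
  have key := core_q_comm ((q ^ s : ℝ):ℂ) ((q ^ (1/2:ℝ) : ℝ):ℂ) (ε:ℂ)
    (f s) (f (s+1)) (f (s-1)) hU hV h2c hp2c hm2c h1Vc hE
  simp only [aOp3, aPlusOp3]
  rw [show s + 1/2 + 1/2 = s + 1 by ring, show s + 1/2 - 1/2 = s by ring,
      show s - 1/2 + 1/2 = s by ring, show s - 1/2 - 1/2 = s - 1 by ring]
  rw [show q ^ (-(s + 1/2)) = (q ^ s * q ^ (1/2:ℝ))⁻¹ by
        rw [Real.rpow_neg hq.le, Real.rpow_add hq],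
      show q ^ (s + 1/2) = q ^ s * q ^ (1/2:ℝ) by rw [Real.rpow_add hq],
      show q ^ (s - 1/2) = q ^ s / q ^ (1/2:ℝ) by rw [Real.rpow_sub hq],
      show q ^ (-(s - 1/2)) = q ^ (1/2:ℝ) / q ^ s by rw [neg_sub, Real.rpow_sub hq],
      show q ^ (-s) = (q ^ s)⁻¹ by rw [Real.rpow_neg hq.le],
      show q ^ (-(s + 1)) = (q ^ s * q)⁻¹ by
        rw [Real.rpow_neg hq.le, Real.rpow_add hq, Real.rpow_one],
      show q ^ (s - 1) = q ^ s / q by rw [Real.rpow_sub hq, Real.rpow_one]]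
  push_cast
  rw [show ((q:ℝ):ℂ) = ((q ^ (1/2:ℝ) : ℝ):ℂ)^2 by
        rw [← Complex.ofReal_pow, pow_two, hv2]]
  linear_combination key
end
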